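/- arXiv:1711.06927 — 2 statements merged into one kernel-verified Lean document; each statement's English description precedes it below -/
import Mathlib

section
/- Fix an integer k with 7 ≤ k ≤ 11 and set h = 2. For z = (x,y) ∈ ℝ^k × ℝ^2 write u = |x|^2, v = (k−1)|y|^2, and let f(x,y) = (u − v)u^{3/2}/4 and g = ∇f/|∇f|. Then at every point with u > v, div g = [ (1/64)(k−1) u^{5/2} (u − v) ( 25u^2 + 12(k−11)uv + 27v^2 ) ] / [ (1/16) u^2 ( 25u^2 + 2(2k−17)uv + 9v^2 ) ]^{3/2}; in particular |∇f|^2 = (1/16) u^2 ( 25u^2 + 2(2k−17)uv + 9v^2 ) there. -/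
open MeasureTheory
open scoped RealInnerProductSpace ENNReal

noncomputable section

/-- Euclidean norm of the first (`ℝ^k`) component of `z = (x, y)`. -/
def nX (k h : ℕ) (z : EuclideanSpace ℝ (Fin (k + h))) : ℝ :=
  Real.sqrt (∑ i : Fin k, (z (Fin.castAdd h i)) ^ 2)

/-- Euclidean norm of the second (`ℝ^h`) component of `z = (x, y)`. -/
def nY (k h : ℕ) (z : EuclideanSpace ℝ (Fin (k + h))) : ℝ :=
  Real.sqrt (∑ j : Fin h, (z (Fin.natAdd k j)) ^ 2)

/-- The Lawson cone `M_{kh}`. -/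
def Mset (k h : ℕ) : Set (EuclideanSpace ℝ (Fin (k + h))) :=
  {z | nX k h z / Real.sqrt ((k : ℝ) - 1) = nY k h z / Real.sqrt ((h : ℝ) - 1)}

/-- The open region `K_{kh}` bounded by the Lawson cone. -/
def Kset (k h : ℕ) : Set (EuclideanSpace ℝ (Fin (k + h))) :=
  {z | nX k h z / Real.sqrt ((k : ℝ) - 1) < nY k h z / Real.sqrt ((h : ℝ) - 1)}

/-- The cylinder `H_R = B_R^k × B_R^h`. -/
def Hset (k h : ℕ) (R : ℝ) : Set (EuclideanSpace ℝ (Fin (k + h))) :=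
  {z | nX k h z < R ∧ nY k h z < R}

/-- The exceptional set `S` of pairs. -/
def S : Set (ℕ × ℕ) := {(3, 5), (2, 7), (2, 8), (2, 9), (2, 10), (2, 11)}

/-- Divergence of a vector field, as the trace of its derivative
(equivalently `∑ i, ∂ᵢ gᵢ`). -/
def divg {n : ℕ} (g : EuclideanSpace ℝ (Fin n) → EuclideanSpace ℝ (Fin n))
    (z : EuclideanSpace ℝ (Fin n)) : ℝ :=
  LinearMap.trace ℝ _ (fderiv ℝ g z).toLinearMap

/-- `u = (h-1)|x|^2 = |x|^2` (here `h = 2`). -/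
def uu (k : ℕ) (z : EuclideanSpace ℝ (Fin (k + 2))) : ℝ := nX k 2 z ^ 2

/-- `v = (k-1)|y|^2`. -/
def vv (k : ℕ) (z : EuclideanSpace ℝ (Fin (k + 2))) : ℝ := ((k : ℝ) - 1) * nY k 2 z ^ 2

/-- `f₊(x,y) = (u - v)·u^{3/2}/4`. -/
def fp (k : ℕ) (z : EuclideanSpace ℝ (Fin (k + 2))) : ℝ :=
  (uu k z - vv k z) * uu k z ^ ((3 : ℝ) / 2) / 4

/-- `f₋(x,y) = (u - v)·v/4`. -/
def fm (k : ℕ) (z : EuclideanSpace ℝ (Fin (k + 2))) : ℝ := (uu k z - vv k z) * vv k z / 4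

/-!
`f(z) = F(|x|², |y|²)` with `F(a, b) = (a - (k - 1)b) a^{3/2} / 4`. With `P` the orthogonal
projection onto the `x`-coordinates, the chain rule gives `∇f = 2 ∂ₐF • P z + 2 ∂_b F • (1 - P) z`,
so on `{u > v}` also `g = φ(a, b) • P z + ψ(a, b) • (1 - P) z` for explicit `φ, ψ`.
For every field of this shape `div g = (tr P) φ + (tr (1 - P)) ψ + 2a ∂ₐφ + 2b ∂_b ψ`, with
`tr P = k` and `tr (1 - P) = 2`; what remains are one-variable derivatives and a polynomial
identity. Writing `25u² + 2(2k - 17)uv + 9v² = (5u - 3v)² + 4(k - 1)uv` shows that this form is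
positive on `{u > v}`.
-/

section PartialDeriv

variable {F : Type*} [NormedAddCommGroup F] [NormedSpace ℝ F] {φ : ℝ × ℝ → F} {p : ℝ × ℝ}
  {d : F}

lemma fderiv_apply_mk_zero (hφ : DifferentiableAt ℝ φ p)
    (hd : HasDerivAt (fun a => φ (a, p.2)) d p.1) (x : ℝ) : fderiv ℝ φ p (x, 0) = x • d := by
  have h : HasDerivAt (fun a => φ (a, p.2)) (fderiv ℝ φ p (1, 0)) p.1 :=
    hφ.hasFDerivAt.comp_hasDerivAt p.1 ((hasDerivAt_id p.1).prodMk (hasDerivAt_const p.1 p.2))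
  rw [show ((x, 0) : ℝ × ℝ) = x • (1, 0) by simp, map_smul, h.unique hd]

lemma fderiv_apply_zero_mk (hφ : DifferentiableAt ℝ φ p)
    (hd : HasDerivAt (fun b => φ (p.1, b)) d p.2) (y : ℝ) : fderiv ℝ φ p (0, y) = y • d := by
  have h : HasDerivAt (fun b => φ (p.1, b)) (fderiv ℝ φ p (0, 1)) p.2 :=
    hφ.hasFDerivAt.comp_hasDerivAt p.2 ((hasDerivAt_const p.2 p.1).prodMk (hasDerivAt_id p.2))
  rw [show ((0, y) : ℝ × ℝ) = y • (0, 1) by simp, map_smul, h.unique hd]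

end PartialDeriv

section StarProjection

variable {E : Type*} [NormedAddCommGroup E] [InnerProductSpace ℝ E] [CompleteSpace E]
  {P : E →L[ℝ] E}

lemma IsStarProjection.inner_apply_apply (hP : IsStarProjection P) (a b : E) :
    ⟪P a, P b⟫ = ⟪P a, b⟫ := by
  have hsymm := ContinuousLinearMap.isSelfAdjoint_iff_isSymmetric.mp hP.isSelfAdjoint
  calc ⟪P a, P b⟫ = ⟪a, (P * P) b⟫ := hsymm a (P b)
    _ = ⟪P a, b⟫ := by rw [hP.isIdempotentElem.eq]; exact (hsymm a b).symm

lemma IsStarProjection.inner_apply_one_sub_apply (hP : IsStarProjection P) (a b : E) :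
    ⟪P a, (1 - P) b⟫ = 0 := by
  rw [← hP.inner_apply_apply]
  change ⟪P a, (P * (1 - P)) b⟫ = 0
  rw [hP.mul_one_sub_self, zero_apply, inner_zero_right]

lemma IsStarProjection.norm_smul_add_smul_one_sub_sq (hP : IsStarProjection P) (a b : ℝ)
    (z : E) : ‖a • P z + b • (1 - P) z‖ ^ 2 = a ^ 2 * ‖P z‖ ^ 2 + b ^ 2 * ‖(1 - P) z‖ ^ 2 := by
  rw [norm_add_sq_real, real_inner_smul_left, real_inner_smul_right,
    hP.inner_apply_one_sub_apply, norm_smul, norm_smul, mul_pow, mul_pow, Real.norm_eq_abs,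
    Real.norm_eq_abs, sq_abs, sq_abs]
  ring

lemma IsStarProjection.hasFDerivAt_norm_sq_prod (hP : IsStarProjection P) (z : E) :
    HasFDerivAt (fun w => (‖P w‖ ^ 2, ‖(1 - P) w‖ ^ 2))
      ((2 : ℝ) • (innerSL ℝ (P z)).prod (innerSL ℝ ((1 - P) z))) z := by
  refine (P.hasFDerivAt.norm_sq.prodMk (1 - P).hasFDerivAt.norm_sq).congr_fderiv ?_
  have hQ := hP.one_sub
  generalize 1 - P = Q at hQ ⊢
  ext v
  · simp [hP.inner_apply_apply]
  · simp [hQ.inner_apply_apply]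

theorem IsStarProjection.hasGradientAt_comp_norm_sq_prod (hP : IsStarProjection P)
    {F : ℝ × ℝ → ℝ} {z : E} {F₁ F₂ : ℝ} (hF : DifferentiableAt ℝ F (‖P z‖ ^ 2, ‖(1 - P) z‖ ^ 2))
    (hF₁ : HasDerivAt (fun a => F (a, ‖(1 - P) z‖ ^ 2)) F₁ (‖P z‖ ^ 2))
    (hF₂ : HasDerivAt (fun b => F (‖P z‖ ^ 2, b)) F₂ (‖(1 - P) z‖ ^ 2)) :
    HasGradientAt (fun w => F (‖P w‖ ^ 2, ‖(1 - P) w‖ ^ 2))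
      ((2 * F₁) • P z + (2 * F₂) • (1 - P) z) z := by
  rw [hasGradientAt_iff_hasFDerivAt]
  refine (hF.hasFDerivAt.comp z (hP.hasFDerivAt_norm_sq_prod z)).congr_fderiv ?_
  ext v
  have hv : ((2 : ℝ) • (innerSL ℝ (P z)).prod (innerSL ℝ ((1 - P) z))) v
      = (2 * ⟪P z, v⟫, 0) + (0, 2 * ⟪(1 - P) z, v⟫) := by
    simp only [smul_apply, ContinuousLinearMap.prod_apply, coe_innerSL_apply, Prod.smul_mk,
      smul_eq_mul, Prod.mk_add_mk, add_zero, zero_add]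
  rw [ContinuousLinearMap.comp_apply, hv, map_add, fderiv_apply_mk_zero hF hF₁,
    fderiv_apply_zero_mk hF hF₂, InnerProductSpace.toDual_apply_apply, inner_add_left,
    real_inner_smul_left, real_inner_smul_left, smul_eq_mul, smul_eq_mul]
  ring

theorem IsStarProjection.trace_fderiv_smul_add_smul_one_sub [FiniteDimensional ℝ E]
    (hP : IsStarProjection P) {φ ψ : ℝ × ℝ → ℝ} {z : E} {φ₁ ψ₂ : ℝ}
    (hφ : DifferentiableAt ℝ φ (‖P z‖ ^ 2, ‖(1 - P) z‖ ^ 2))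
    (hψ : DifferentiableAt ℝ ψ (‖P z‖ ^ 2, ‖(1 - P) z‖ ^ 2))
    (hφ₁ : HasDerivAt (fun a => φ (a, ‖(1 - P) z‖ ^ 2)) φ₁ (‖P z‖ ^ 2))
    (hψ₂ : HasDerivAt (fun b => ψ (‖P z‖ ^ 2, b)) ψ₂ (‖(1 - P) z‖ ^ 2)) :
    LinearMap.trace ℝ E (fderiv ℝ (fun w =>
        φ (‖P w‖ ^ 2, ‖(1 - P) w‖ ^ 2) • P w + ψ (‖P w‖ ^ 2, ‖(1 - P) w‖ ^ 2) • (1 - P) w) z)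
      = LinearMap.trace ℝ E P.toLinearMap * φ (‖P z‖ ^ 2, ‖(1 - P) z‖ ^ 2)
        + LinearMap.trace ℝ E (1 - P).toLinearMap * ψ (‖P z‖ ^ 2, ‖(1 - P) z‖ ^ 2)
        + 2 * ‖P z‖ ^ 2 * φ₁ + 2 * ‖(1 - P) z‖ ^ 2 * ψ₂ := by
  have hL := hP.hasFDerivAt_norm_sq_prod z
  have hG : HasFDerivAt (fun w =>
      φ (‖P w‖ ^ 2, ‖(1 - P) w‖ ^ 2) • P w + ψ (‖P w‖ ^ 2, ‖(1 - P) w‖ ^ 2) • (1 - P) w) _ z :=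
    ((hφ.hasFDerivAt.comp z hL).smul P.hasFDerivAt).add
      ((hψ.hasFDerivAt.comp z hL).smul (1 - P).hasFDerivAt)
  have hLP : ((2 : ℝ) • (innerSL ℝ (P z)).prod (innerSL ℝ ((1 - P) z))) (P z)
      = (2 * ‖P z‖ ^ 2, 0) := by
    simp only [smul_apply, ContinuousLinearMap.prod_apply, coe_innerSL_apply,
      real_inner_self_eq_norm_sq, real_inner_comm (P z), hP.inner_apply_one_sub_apply,
      Prod.smul_mk, smul_eq_mul, mul_zero]
  have hLQ : ((2 : ℝ) • (innerSL ℝ (P z)).prod (innerSL ℝ ((1 - P) z))) ((1 - P) z)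
      = (0, 2 * ‖(1 - P) z‖ ^ 2) := by
    simp only [smul_apply, ContinuousLinearMap.prod_apply, coe_innerSL_apply,
      real_inner_self_eq_norm_sq, hP.inner_apply_one_sub_apply, Prod.smul_mk, smul_eq_mul,
      mul_zero]
  have htr (c : E →L[ℝ] ℝ) (v : E) : LinearMap.trace ℝ E (c.smulRight v).toLinearMap = c v :=
    LinearMap.trace_smulRight c.toLinearMap v
  rw [hG.fderiv]
  simp only [ContinuousLinearMap.toLinearMap_add, ContinuousLinearMap.toLinearMap_smul, map_add,
    map_smul, smul_eq_mul, htr, ContinuousLinearMap.comp_apply, hLP, hLQ,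
    fderiv_apply_mk_zero hφ hφ₁, fderiv_apply_zero_mk hψ hψ₂]
  ring

end StarProjection

namespace LawsonCone

variable {k h : ℕ}

def projX (k h : ℕ) : EuclideanSpace ℝ (Fin (k + h)) →L[ℝ] EuclideanSpace ℝ (Fin (k + h)) :=
  LinearMap.toContinuousLinearMap
    { toFun := fun w => WithLp.toLp 2 fun j => if (j : ℕ) < k then w j else 0
      map_add' := fun w w' => by ext j; by_cases hj : (j : ℕ) < k <;> simp [hj]
      map_smul' := fun c w => by ext j; by_cases hj : (j : ℕ) < k <;> simp [hj] }

lemma projX_apply (w : EuclideanSpace ℝ (Fin (k + h))) (j : Fin (k + h)) :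
    projX k h w j = if (j : ℕ) < k then w j else 0 := rfl

lemma one_sub_projX_apply (w : EuclideanSpace ℝ (Fin (k + h))) (j : Fin (k + h)) :
    (1 - projX k h) w j = if (j : ℕ) < k then 0 else w j := by
  simp only [sub_apply, one_apply_eq_self, PiLp.sub_apply, projX_apply]
  split_ifs <;> simp

lemma isStarProjection_projX : IsStarProjection (projX k h) where
  isIdempotentElem := by
    ext w j
    simp only [mul_apply_eq_comp, projX_apply]
    split_ifs <;> rfl
  isSelfAdjoint := ContinuousLinearMap.isSelfAdjoint_iff_isSymmetric.mpr fun a b => by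
    simp only [ContinuousLinearMap.coe_coe, PiLp.inner_apply, projX_apply]
    refine Finset.sum_congr rfl fun j _ => ?_
    split_ifs <;> simp

lemma trace_projX : LinearMap.trace ℝ _ (projX k h).toLinearMap = k := by
  rw [LinearMap.trace_eq_sum_inner _ (EuclideanSpace.basisFun _ ℝ), Fin.sum_univ_add]
  simp [EuclideanSpace.basisFun_apply, EuclideanSpace.inner_single_left, projX_apply]

lemma trace_one_sub_projX : LinearMap.trace ℝ _ (1 - projX k h).toLinearMap = h := by
  rw [ContinuousLinearMap.toLinearMap_sub, map_sub, ContinuousLinearMap.toLinearMap_one,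
    LinearMap.trace_one, trace_projX, finrank_euclideanSpace_fin]
  push_cast
  ring

lemma nX_sq (z : EuclideanSpace ℝ (Fin (k + h))) : nX k h z ^ 2 = ‖projX k h z‖ ^ 2 := by
  rw [nX, Real.sq_sqrt (Finset.sum_nonneg fun _ _ => sq_nonneg _), EuclideanSpace.norm_sq_eq,
    Fin.sum_univ_add]
  simp [projX_apply]

lemma nY_sq (z : EuclideanSpace ℝ (Fin (k + h))) : nY k h z ^ 2 = ‖(1 - projX k h) z‖ ^ 2 := by
  rw [nY, Real.sq_sqrt (Finset.sum_nonneg fun _ _ => sq_nonneg _), EuclideanSpace.norm_sq_eq,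
    Fin.sum_univ_add]
  simp only [one_sub_projX_apply]
  simp

def lawsonQuad (k u v : ℝ) : ℝ := 25 * u ^ 2 + 2 * (2 * k - 17) * u * v + 9 * v ^ 2

lemma lawsonQuad_pos {k u v : ℝ} (hk : 1 ≤ k) (hv : 0 ≤ v) (huv : v < u) :
    0 < lawsonQuad k u v := by
  have h : lawsonQuad k u v = (5 * u - 3 * v) ^ 2 + 4 * (k - 1) * u * v := by
    unfold lawsonQuad; ring
  have h5 : 0 < 5 * u - 3 * v := by linarith
  have h4 : 0 ≤ 4 * (k - 1) * u * v := mul_nonneg (mul_nonneg (by linarith) (by linarith)) hv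
  rw [h]
  positivity

lemma hasDerivAt_lawsonQuad_fst (k u v : ℝ) :
    HasDerivAt (fun u => lawsonQuad k u v) (50 * u + 2 * (2 * k - 17) * v) u := by
  have h := (((hasDerivAt_pow 2 u).const_mul 25).add
    (((hasDerivAt_id' u).const_mul (2 * (2 * k - 17))).mul_const v)).add_const (9 * v ^ 2)
  exact h.congr_deriv (by norm_num; ring)

lemma hasDerivAt_lawsonQuad_snd (k u v : ℝ) :
    HasDerivAt (fun v => lawsonQuad k u v) (2 * (2 * k - 17) * u + 18 * v) v := by
  have h := (((hasDerivAt_id' v).const_mul (2 * (2 * k - 17) * u)).const_add (25 * u ^ 2)).add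
    ((hasDerivAt_pow 2 v).const_mul 9)
  exact h.congr_deriv (by norm_num; ring)

lemma one_div_sixteen_mul_sq_mul_rpow_three_halves {a Q : ℝ} (ha : 0 < a) (hQ : 0 < Q) :
    (1 / 16 * a ^ 2 * Q) ^ ((3 : ℝ) / 2) = a ^ ((5 : ℝ) / 2) * Q * √(a * Q) / 64 := by
  obtain ⟨s, hs, rfl⟩ : ∃ s, 0 < s ∧ a = s ^ 2 :=
    ⟨√a, Real.sqrt_pos.2 ha, (Real.sq_sqrt ha.le).symm⟩
  obtain ⟨q, hq, rfl⟩ : ∃ q, 0 < q ∧ Q = q ^ 2 :=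
    ⟨√Q, Real.sqrt_pos.2 hQ, (Real.sq_sqrt hQ.le).symm⟩
  rw [show 1 / 16 * (s ^ 2) ^ 2 * q ^ 2 = (s ^ 2 * q / 4) ^ 2 by ring,
    show s ^ 2 * q ^ 2 = (s * q) ^ 2 by ring, Real.rpow_div_two_eq_sqrt _ (by positivity),
    Real.rpow_div_two_eq_sqrt _ (by positivity), Real.sqrt_sq hs.le, Real.sqrt_sq (by positivity),
    Real.sqrt_sq (by positivity)]
  norm_cast
  ring

lemma uu_eq (z : EuclideanSpace ℝ (Fin (k + 2))) : uu k z = ‖projX k 2 z‖ ^ 2 :=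
  nX_sq z

lemma vv_eq (z : EuclideanSpace ℝ (Fin (k + 2))) :
    vv k z = ((k : ℝ) - 1) * ‖(1 - projX k 2) z‖ ^ 2 := by
  rw [vv, nY_sq]

lemma vv_nonneg (hk : 1 ≤ k) (z : EuclideanSpace ℝ (Fin (k + 2))) : 0 ≤ vv k z :=
  mul_nonneg (sub_nonneg.2 (by exact_mod_cast hk)) (sq_nonneg _)

lemma uu_pos (hk : 1 ≤ k) {z : EuclideanSpace ℝ (Fin (k + 2))} (hz : vv k z < uu k z) :
    0 < uu k z :=
  (vv_nonneg hk z).trans_lt hz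

def fpProfile (k : ℕ) (p : ℝ × ℝ) : ℝ :=
  (p.1 - ((k : ℝ) - 1) * p.2) * p.1 ^ ((3 : ℝ) / 2) / 4

lemma fp_eq : fp k = fun w => fpProfile k (‖projX k 2 w‖ ^ 2, ‖(1 - projX k 2) w‖ ^ 2) := by
  funext w
  rw [fp, uu_eq, vv_eq]
  rfl

theorem hasGradientAt_fp {z : EuclideanSpace ℝ (Fin (k + 2))} (hz : 0 < uu k z) :
    HasGradientAt (fp k) ((√(uu k z) * (5 * uu k z - 3 * vv k z) / 4) • projX k 2 z
      + (-(((k : ℝ) - 1) * uu k z * √(uu k z)) / 2) • (1 - projX k 2) z) z := by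
  rw [fp_eq, uu_eq, vv_eq]
  rw [uu_eq] at hz
  set p : ℝ × ℝ := (‖projX k 2 z‖ ^ 2, ‖(1 - projX k 2) z‖ ^ 2)
  set c : ℝ := (k : ℝ) - 1
  have hs : √p.1 ^ 2 = p.1 := Real.sq_sqrt hz.le
  have h32 : p.1 ^ ((3 : ℝ) / 2) = √p.1 ^ 3 := by
    rw [Real.rpow_div_two_eq_sqrt _ hz.le]; norm_cast
  have hF : DifferentiableAt ℝ (fpProfile k) p := by
    unfold fpProfile; fun_prop (disch := norm_num)
  have h₁ : HasDerivAt (fun a => fpProfile k (a, p.2))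
      (√p.1 * (5 * p.1 - 3 * (c * p.2)) / 8) p.1 := by
    have h := (((hasDerivAt_id' p.1).sub_const (c * p.2)).mul
      (Real.hasDerivAt_rpow_const (p := (3 : ℝ) / 2) (Or.inl hz.ne'))).div_const 4
    refine h.congr_deriv ?_
    rw [show (3 : ℝ) / 2 - 1 = 1 / 2 by norm_num, ← Real.sqrt_eq_rpow, h32]
    linear_combination (√p.1 / 4) * hs
  have h₂ : HasDerivAt (fun b => fpProfile k (p.1, b)) (-(c * p.1 * √p.1) / 4) p.2 := by
    have h := ((((hasDerivAt_id' p.2).const_mul c).const_sub p.1).mul_const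
      (p.1 ^ ((3 : ℝ) / 2))).div_const 4
    refine h.congr_deriv ?_
    rw [h32]
    linear_combination (-(c * √p.1) / 4) * hs
  convert isStarProjection_projX.hasGradientAt_comp_norm_sq_prod hF h₁ h₂ using 3 <;> ring

theorem norm_gradient_fp_sq {z : EuclideanSpace ℝ (Fin (k + 2))} (hz : 0 < uu k z) :
    ‖gradient (fp k) z‖ ^ 2 = 1 / 16 * uu k z ^ 2 * lawsonQuad k (uu k z) (vv k z) := by
  have hs : √(uu k z) ^ 2 = uu k z := Real.sq_sqrt hz.le
  rw [(hasGradientAt_fp hz).gradient, isStarProjection_projX.norm_smul_add_smul_one_sub_sq,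
    ← uu_eq, vv_eq, lawsonQuad]
  set u := uu k z
  set y := ‖(1 - projX k 2) z‖ ^ 2
  linear_combination ((5 * u - 3 * (((k : ℝ) - 1) * y)) ^ 2 * u / 16
    + ((k : ℝ) - 1) ^ 2 * u ^ 2 * y / 4) * hs

def gX (k : ℕ) (p : ℝ × ℝ) : ℝ :=
  (5 * p.1 - 3 * (((k : ℝ) - 1) * p.2)) / √(p.1 * lawsonQuad k p.1 (((k : ℝ) - 1) * p.2))

def gY (k : ℕ) (p : ℝ × ℝ) : ℝ :=
  -(2 * ((k : ℝ) - 1) * p.1) / √(p.1 * lawsonQuad k p.1 (((k : ℝ) - 1) * p.2))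

lemma inv_norm_smul_gradient_fp (hk : 1 ≤ k) {z : EuclideanSpace ℝ (Fin (k + 2))}
    (hz : vv k z < uu k z) :
    ‖gradient (fp k) z‖⁻¹ • gradient (fp k) z
      = gX k (‖projX k 2 z‖ ^ 2, ‖(1 - projX k 2) z‖ ^ 2) • projX k 2 z
        + gY k (‖projX k 2 z‖ ^ 2, ‖(1 - projX k 2) z‖ ^ 2) • (1 - projX k 2) z := by
  have hu := uu_pos hk hz
  have hQ := lawsonQuad_pos (k := (k : ℝ)) (by exact_mod_cast hk) (vv_nonneg hk z) hz
  have hs : √(uu k z) ^ 2 = uu k z := Real.sq_sqrt hu.le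
  have hnorm : ‖gradient (fp k) z‖ = uu k z * √(lawsonQuad k (uu k z) (vv k z)) / 4 := by
    rw [← Real.sqrt_sq (norm_nonneg _), norm_gradient_fp_sq hu,
      show 1 / 16 * uu k z ^ 2 * lawsonQuad k (uu k z) (vv k z)
        = (uu k z / 4) ^ 2 * lawsonQuad k (uu k z) (vv k z) by ring,
      Real.sqrt_mul (by positivity), Real.sqrt_sq (by positivity)]
    ring
  rw [hnorm, (hasGradientAt_fp hu).gradient, smul_add, smul_smul, smul_smul, gX, gY, ← uu_eq,
    ← vv_eq, Real.sqrt_mul hu.le]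
  have hq := Real.sqrt_pos.2 hQ
  have hs0 := Real.sqrt_pos.2 hu
  congr 2
  · field_simp
    linear_combination (5 * uu k z - 3 * vv k z) * hs
  · field_simp
    linear_combination (4 - 4 * (k : ℝ)) * hs

open Filter Topology in
lemma inv_norm_smul_gradient_fp_eventuallyEq (hk : 1 ≤ k) {z : EuclideanSpace ℝ (Fin (k + 2))}
    (hz : vv k z < uu k z) :
    (fun w => ‖gradient (fp k) w‖⁻¹ • gradient (fp k) w) =ᶠ[𝓝 z] fun w =>
      gX k (‖projX k 2 w‖ ^ 2, ‖(1 - projX k 2) w‖ ^ 2) • projX k 2 w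
        + gY k (‖projX k 2 w‖ ^ 2, ‖(1 - projX k 2) w‖ ^ 2) • (1 - projX k 2) w := by
  have hopen : IsOpen {w | vv k w < uu k w} := by
    simp_rw [uu_eq, vv_eq]
    exact isOpen_lt (by fun_prop) (by fun_prop)
  filter_upwards [hopen.mem_nhds hz] with w hw using inv_norm_smul_gradient_fp hk hw

lemma differentiableAt_gX {p : ℝ × ℝ} (hD : 0 < p.1 * lawsonQuad k p.1 (((k : ℝ) - 1) * p.2)) :
    DifferentiableAt ℝ (gX k) p := by
  have hr := Real.sqrt_pos.2 hD
  unfold gX lawsonQuad at *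
  fun_prop (disch := first | exact hD.ne' | exact hr.ne')

lemma differentiableAt_gY {p : ℝ × ℝ} (hD : 0 < p.1 * lawsonQuad k p.1 (((k : ℝ) - 1) * p.2)) :
    DifferentiableAt ℝ (gY k) p := by
  have hr := Real.sqrt_pos.2 hD
  unfold gY lawsonQuad at *
  fun_prop (disch := first | exact hD.ne' | exact hr.ne')

lemma hasDerivAt_gX_fst {a b : ℝ} (hD : 0 < a * lawsonQuad k a (((k : ℝ) - 1) * b)) :
    HasDerivAt (fun a => gX k (a, b))
      ((10 * (a * lawsonQuad k a (((k : ℝ) - 1) * b)) - (5 * a - 3 * (((k : ℝ) - 1) * b))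
          * (lawsonQuad k a (((k : ℝ) - 1) * b)
            + a * (50 * a + 2 * (2 * k - 17) * (((k : ℝ) - 1) * b))))
        / (2 * (a * lawsonQuad k a (((k : ℝ) - 1) * b))
          * √(a * lawsonQuad k a (((k : ℝ) - 1) * b)))) a := by
  have h := (((hasDerivAt_id' a).const_mul 5).sub_const (3 * (((k : ℝ) - 1) * b))).div
    (((hasDerivAt_id' a).mul (hasDerivAt_lawsonQuad_fst k a (((k : ℝ) - 1) * b))).sqrt hD.ne')
    (Real.sqrt_pos.2 hD).ne'
  refine h.congr_deriv ?_
  have ha := left_ne_zero_of_mul hD.ne'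
  have hQ := right_ne_zero_of_mul hD.ne'
  simp only [Pi.mul_apply]
  rw [Real.sq_sqrt hD.le]
  field_simp
  rw [Real.sq_sqrt hD.le]
  ring

lemma hasDerivAt_gY_snd {a b : ℝ} (hD : 0 < a * lawsonQuad k a (((k : ℝ) - 1) * b)) :
    HasDerivAt (fun b => gY k (a, b))
      (((k : ℝ) - 1) ^ 2 * a ^ 2 * (2 * (2 * k - 17) * a + 18 * (((k : ℝ) - 1) * b))
        / (a * lawsonQuad k a (((k : ℝ) - 1) * b)
          * √(a * lawsonQuad k a (((k : ℝ) - 1) * b)))) b := by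
  have h := (hasDerivAt_const b (-(2 * ((k : ℝ) - 1) * a))).div
    ((((hasDerivAt_lawsonQuad_snd k a (((k : ℝ) - 1) * b)).comp b
      ((hasDerivAt_id' b).const_mul ((k : ℝ) - 1))).const_mul a).sqrt hD.ne')
    (Real.sqrt_pos.2 hD).ne'
  refine h.congr_deriv ?_
  have ha := left_ne_zero_of_mul hD.ne'
  have hQ := right_ne_zero_of_mul hD.ne'
  simp only [Function.comp_apply]
  rw [Real.sq_sqrt hD.le]
  field_simp
  ring

theorem divg_inv_norm_smul_gradient_fp (hk : 1 ≤ k) {z : EuclideanSpace ℝ (Fin (k + 2))}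
    (hz : vv k z < uu k z) :
    divg (fun w => ‖gradient (fp k) w‖⁻¹ • gradient (fp k) w) z =
        (1 / 64 * ((k : ℝ) - 1) * uu k z ^ ((5 : ℝ) / 2) * (uu k z - vv k z) *
            (25 * uu k z ^ 2 + 12 * ((k : ℝ) - 11) * uu k z * vv k z + 27 * vv k z ^ 2))
          / (1 / 16 * uu k z ^ 2 * lawsonQuad k (uu k z) (vv k z)) ^ ((3 : ℝ) / 2) := by
  have hu := uu_pos hk hz
  have hQ := lawsonQuad_pos (k := (k : ℝ)) (by exact_mod_cast hk) (vv_nonneg hk z) hz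
  rw [divg, (inv_norm_smul_gradient_fp_eventuallyEq hk hz).fderiv_eq,
    one_div_sixteen_mul_sq_mul_rpow_three_halves hu hQ]
  rw [uu_eq] at hu
  rw [uu_eq, vv_eq] at hQ ⊢
  have hD := mul_pos hu hQ
  rw [isStarProjection_projX.trace_fderiv_smul_add_smul_one_sub (differentiableAt_gX hD)
    (differentiableAt_gY hD) (hasDerivAt_gX_fst hD) (hasDerivAt_gY_snd hD), trace_projX,
    trace_one_sub_projX, gX, gY]
  generalize ‖projX k 2 z‖ ^ 2 = a at hu hQ hD ⊢
  generalize ‖(1 - projX k 2) z‖ ^ 2 = b at hQ hD ⊢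
  have h52 := (Real.rpow_pos_of_pos hu ((5 : ℝ) / 2)).ne'
  have hr := (Real.sqrt_pos.2 hD).ne'
  have hQ0 := hQ.ne'
  have ha0 := hu.ne'
  field_simp
  unfold lawsonQuad
  ring

end LawsonCone

theorem stmt14_general (k : ℕ) (hk7 : 7 ≤ k)
    (z : EuclideanSpace ℝ (Fin (k + 2))) (hz : vv k z < uu k z) :
    divg (fun w => ‖gradient (fp k) w‖⁻¹ • gradient (fp k) w) z =
        (1 / 64 * ((k : ℝ) - 1) * uu k z ^ ((5 : ℝ) / 2) * (uu k z - vv k z) *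
            (25 * uu k z ^ 2 + 12 * ((k : ℝ) - 11) * uu k z * vv k z + 27 * vv k z ^ 2))
          / (1 / 16 * uu k z ^ 2 *
              (25 * uu k z ^ 2 + 2 * (2 * (k : ℝ) - 17) * uu k z * vv k z
                + 9 * vv k z ^ 2)) ^ ((3 : ℝ) / 2) ∧
      ‖gradient (fp k) z‖ ^ 2 =
        1 / 16 * uu k z ^ 2 *
          (25 * uu k z ^ 2 + 2 * (2 * (k : ℝ) - 17) * uu k z * vv k z
            + 9 * vv k z ^ 2) := by
  have hk : 1 ≤ k := by omega
  exact ⟨LawsonCone.divg_inv_norm_smul_gradient_fp hk hz,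
    LawsonCone.norm_gradient_fp_sq (LawsonCone.uu_pos hk hz)⟩

/-- The explicit formula for `div g` and `|∇f₊|^2` on `{u > v}` for `(h,k) = (2,k)`
with `d = 3/2` (Section 3.3 of the paper). -/
theorem stmt14 (k : ℕ) (hk7 : 7 ≤ k) (hk11 : k ≤ 11)
    (z : EuclideanSpace ℝ (Fin (k + 2))) (hz : vv k z < uu k z) :
    divg (fun w => ‖gradient (fp k) w‖⁻¹ • gradient (fp k) w) z =
        (1 / 64 * ((k : ℝ) - 1) * uu k z ^ ((5 : ℝ) / 2) * (uu k z - vv k z) *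
            (25 * uu k z ^ 2 + 12 * ((k : ℝ) - 11) * uu k z * vv k z + 27 * vv k z ^ 2))
          / (1 / 16 * uu k z ^ 2 *
              (25 * uu k z ^ 2 + 2 * (2 * (k : ℝ) - 17) * uu k z * vv k z
                + 9 * vv k z ^ 2)) ^ ((3 : ℝ) / 2) ∧
      ‖gradient (fp k) z‖ ^ 2 =
        1 / 16 * uu k z ^ 2 *
          (25 * uu k z ^ 2 + 2 * (2 * (k : ℝ) - 17) * uu k z * vv k z
            + 9 * vv k z ^ 2) :=
  stmt14_general k hk7 z hz
end
end

section
/- Fix an integer k with 7 ≤ k ≤ 11 and set h = 2. For z = (x,y) ∈ ℝ^k × ℝ^2 write u = |x|^2, v = (k−1)|y|^2, and let f(x,y) = (u − v)v/4 and g = ∇f/|∇f|. Then at every point with u < v, div g = [ (1/8)(k−1)(u − v) v ( (k−1)u^2 + (3−4k)uv + 4(k−2)v^2 ) ] / [ (1/4) v ( (k−1)(u − 2v)^2 + uv ) ]^{3/2}; in particular |∇f|^2 = (1/4) v ( (k−1)(u − 2v)^2 + uv ) there. -/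
/-!
For a vector field `G` with `G z ≠ 0`,
`div (G / |G|) = (|G|² div G - ⟪G, DG G⟫) / |G|³`, so it suffices to know the Laplacian
`Δf = tr D²f` and the quadratic form `⟪∇f, D²f ∇f⟫`. With `P`, `Q` the coordinate projections
onto `ℝ^k × 0` and `0 × ℝ²` one has `u = |Pz|²`, `v = (k-1)|Qz|²` and
`∇f = (v/2) Pz + ((k-1)(u-2v)/2) Qz`, and `D²f` maps `∇f` back into the span of `Pz` and `Qz`.
Both quantities are therefore polynomials in `u` and `v`, and the formula becomes a polynomial
identity. On `{u < v}` the gradient does not vanish: there `v > 0`, which forces `k > 1`, and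
`u ≠ 2v`.
-/

open MeasureTheory
open scoped RealInnerProductSpace ENNReal

noncomputable section

open scoped Matrix
open Finset

section Divergence

variable {n : ℕ} {G : EuclideanSpace ℝ (Fin n) → EuclideanSpace ℝ (Fin n)}
  {G' : EuclideanSpace ℝ (Fin n) →L[ℝ] EuclideanSpace ℝ (Fin n)} {z : EuclideanSpace ℝ (Fin n)}

theorem HasFDerivAt.divg_eq (hG : HasFDerivAt G G' z) :
    divg G z = LinearMap.trace ℝ _ G'.toLinearMap := by
  rw [divg, hG.fderiv]

theorem divg_smul {φ : EuclideanSpace ℝ (Fin n) → ℝ} {φ' : EuclideanSpace ℝ (Fin n) →L[ℝ] ℝ}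
    (hφ : HasFDerivAt φ φ' z) (hG : HasFDerivAt G G' z) :
    divg (fun w => φ w • G w) z = φ z * LinearMap.trace ℝ _ G'.toLinearMap + φ' (G z) := by
  rw [(hφ.fun_smul hG).divg_eq]
  simp [ContinuousLinearMap.coe_smulRight]

theorem divg_inv_norm_smul (hG : HasFDerivAt G G' z) (hz : G z ≠ 0) :
    divg (fun w => ‖G w‖⁻¹ • G w) z =
      (‖G z‖ ^ 2 * LinearMap.trace ℝ _ G'.toLinearMap - ⟪G z, G' (G z)⟫) / ‖G z‖ ^ 3 := by
  have hpos : 0 < ‖G z‖ ^ 2 := by positivity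
  have hinv : HasDerivAt (fun t => (√t)⁻¹) (-(1 / (2 * √(‖G z‖ ^ 2))) / √(‖G z‖ ^ 2) ^ 2)
      (‖G z‖ ^ 2) :=
    (Real.hasDerivAt_sqrt hpos.ne').inv (Real.sqrt_pos.2 hpos).ne'
  have hφ := hinv.comp_hasFDerivAt z hG.norm_sq
  simp only [Function.comp_def, Real.sqrt_sq (norm_nonneg _)] at hφ
  rw [divg_smul hφ hG]
  simp only [one_div, mul_inv_rev, smul_apply, ContinuousLinearMap.comp_apply,
    coe_innerSL_apply, nsmul_eq_mul, Nat.cast_ofNat, smul_eq_mul]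
  field_simp
  ring

end Divergence

def coordProj {ι : Type*} [Fintype ι] [DecidableEq ι] (p : ι → Prop) [DecidablePred p] :
    EuclideanSpace ℝ ι →L[ℝ] EuclideanSpace ℝ ι :=
  Matrix.toEuclideanCLM (𝕜 := ℝ) (Matrix.diagonal fun m => if p m then 1 else 0)

section CoordProj

variable {ι : Type*} [Fintype ι] [DecidableEq ι] (p : ι → Prop) [DecidablePred p]

theorem coordProj_apply (z : EuclideanSpace ℝ ι) (m : ι) :
    coordProj p z m = if p m then z m else 0 := by
  change (Matrix.diagonal _ *ᵥ z.ofLp) m = _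
  simp [Matrix.mulVec_diagonal]

@[simp]
theorem coordProj_coordProj (z : EuclideanSpace ℝ ι) :
    coordProj p (coordProj p z) = coordProj p z := by
  ext m; simp only [coordProj_apply]; split_ifs <;> rfl

@[simp]
theorem coordProj_coordProj_not (z : EuclideanSpace ℝ ι) :
    coordProj p (coordProj (¬ p ·) z) = 0 := by
  ext m; simp only [coordProj_apply]; split_ifs <;> simp_all

@[simp]
theorem coordProj_not_coordProj (z : EuclideanSpace ℝ ι) :
    coordProj (¬ p ·) (coordProj p z) = 0 := by
  ext m; simp only [coordProj_apply]; split_ifs <;> simp_all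

theorem inner_coordProj_coordProj_not (a b : EuclideanSpace ℝ ι) :
    ⟪coordProj p a, coordProj (¬ p ·) b⟫ = 0 := by
  rw [PiLp.inner_apply]
  refine sum_eq_zero fun m _ => ?_
  simp only [coordProj_apply]
  split_ifs <;> simp_all

theorem inner_coordProj_not_coordProj (a b : EuclideanSpace ℝ ι) :
    ⟪coordProj (¬ p ·) a, coordProj p b⟫ = 0 := by
  rw [real_inner_comm, inner_coordProj_coordProj_not]

theorem inner_coordProj_coordProj (a b : EuclideanSpace ℝ ι) :
    ⟪coordProj p a, coordProj p b⟫ = ⟪coordProj p a, b⟫ := by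
  simp only [PiLp.inner_apply, coordProj_apply]
  refine sum_congr rfl fun m _ => ?_
  split_ifs <;> simp

theorem trace_coordProj : LinearMap.trace ℝ _ (coordProj p).toLinearMap = #{m | p m} := by
  rw [coordProj, Matrix.coe_toEuclideanCLM_eq_toEuclideanLin,
    Matrix.toEuclideanLin_eq_toLin_orthonormal, Matrix.trace_toLin_eq, Matrix.trace_diagonal,
    sum_boole]

theorem hasFDerivAt_norm_coordProj_sq (z : EuclideanSpace ℝ ι) :
    HasFDerivAt (fun w => ‖coordProj p w‖ ^ 2) (innerSL ℝ ((2 : ℝ) • coordProj p z)) z := by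
  refine (coordProj p).hasFDerivAt.norm_sq.congr_fderiv ?_
  ext v
  simp [inner_coordProj_coordProj]

end CoordProj

abbrev projX (k h : ℕ) := coordProj fun m : Fin (k + h) => (m : ℕ) < k

-- Written with `¬` rather than `k ≤ m` so that the `coordProj (¬ p ·)` lemmas apply.
abbrev projY (k h : ℕ) := coordProj fun m : Fin (k + h) => ¬ (m : ℕ) < k

section Blocks

variable {k h : ℕ}

theorem trace_projX : LinearMap.trace ℝ _ (projX k h).toLinearMap = k := by
  rw [trace_coordProj, Fin.card_filter_val_lt]
  simp

theorem trace_projY : LinearMap.trace ℝ _ (projY k h).toLinearMap = h := by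
  have hcard := card_filter_add_card_filter_not (s := univ) fun m : Fin (k + h) => (m : ℕ) < k
  rw [Fin.card_filter_val_lt, card_univ, Fintype.card_fin] at hcard
  rw [trace_coordProj]
  norm_cast
  omega

theorem norm_projX (z : EuclideanSpace ℝ (Fin (k + h))) : ‖projX k h z‖ = nX k h z := by
  rw [EuclideanSpace.norm_eq, nX, Fin.sum_univ_add]
  simp [coordProj_apply]

theorem norm_projY (z : EuclideanSpace ℝ (Fin (k + h))) : ‖projY k h z‖ = nY k h z := by
  rw [EuclideanSpace.norm_eq, nY, Fin.sum_univ_add]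
  simp [coordProj_apply]

end Blocks

section Gradient

variable {k : ℕ}

theorem uu_eq_norm_projX_sq (z : EuclideanSpace ℝ (Fin (k + 2))) :
    uu k z = ‖projX k 2 z‖ ^ 2 := by
  rw [uu, norm_projX]

theorem vv_eq_mul_norm_projY_sq (z : EuclideanSpace ℝ (Fin (k + 2))) :
    vv k z = (k - 1) * ‖projY k 2 z‖ ^ 2 := by
  rw [vv, norm_projY]

theorem hasFDerivAt_uu (z : EuclideanSpace ℝ (Fin (k + 2))) :
    HasFDerivAt (uu k) (innerSL ℝ ((2 : ℝ) • projX k 2 z)) z := by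
  simpa only [← uu_eq_norm_projX_sq] using
    hasFDerivAt_norm_coordProj_sq (fun m : Fin (k + 2) => (m : ℕ) < k) z

theorem hasFDerivAt_vv (z : EuclideanSpace ℝ (Fin (k + 2))) :
    HasFDerivAt (vv k) (((k : ℝ) - 1) • innerSL ℝ ((2 : ℝ) • projY k 2 z)) z := by
  simpa only [← vv_eq_mul_norm_projY_sq] using
    (hasFDerivAt_norm_coordProj_sq (fun m : Fin (k + 2) => ¬ (m : ℕ) < k) z).const_mul
      ((k : ℝ) - 1)

def gradFm (k : ℕ) (z : EuclideanSpace ℝ (Fin (k + 2))) : EuclideanSpace ℝ (Fin (k + 2)) :=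
  (vv k z / 2) • projX k 2 z + ((k - 1) * (uu k z - 2 * vv k z) / 2) • projY k 2 z

theorem hasGradientAt_fm (z : EuclideanSpace ℝ (Fin (k + 2))) :
    HasGradientAt (fm k) (gradFm k z) z := by
  have hfm : fm k = fun w => (uu k w - vv k w) * vv k w * (1 / 4) := by
    funext w; rw [fm]; ring
  rw [hasGradientAt_iff_hasFDerivAt, hfm]
  refine (((hasFDerivAt_uu z).fun_sub (hasFDerivAt_vv z)).fun_mul
    (hasFDerivAt_vv z)).mul_const (1 / 4 : ℝ) |>.congr_fderiv ?_
  ext v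
  simp only [gradFm, InnerProductSpace.toDual_apply_apply, inner_add_left, real_inner_smul_left,
    smul_apply, add_apply, sub_apply,
    innerSL_apply_apply, smul_eq_mul]
  ring

theorem gradient_fm : gradient (fm k) = gradFm k :=
  funext fun z => (hasGradientAt_fm z).gradient

theorem norm_gradFm_sq (z : EuclideanSpace ℝ (Fin (k + 2))) :
    ‖gradFm k z‖ ^ 2 =
      1 / 4 * vv k z * (((k : ℝ) - 1) * (uu k z - 2 * vv k z) ^ 2 + uu k z * vv k z) := by
  rw [gradFm, norm_add_sq_real, inner_smul_left, inner_smul_right, inner_coordProj_coordProj_not,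
    norm_smul, norm_smul, uu_eq_norm_projX_sq, vv_eq_mul_norm_projY_sq]
  simp only [Real.norm_eq_abs, mul_pow, sq_abs]
  ring

theorem gradFm_ne_zero {z : EuclideanSpace ℝ (Fin (k + 2))} (hz : uu k z < vv k z) :
    gradFm k z ≠ 0 := by
  have hu : 0 ≤ uu k z := by rw [uu]; positivity
  have hv : 0 < vv k z := hu.trans_lt hz
  have hk : 0 < (k : ℝ) - 1 := by
    rw [vv] at hv
    exact pos_of_mul_pos_left hv (by positivity)
  have hsq : 0 < (uu k z - 2 * vv k z) ^ 2 := by nlinarith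
  refine norm_ne_zero_iff.1 (sq_pos_iff.1 ?_)
  rw [norm_gradFm_sq]
  positivity

end Gradient

section Hessian

variable {k : ℕ}

def hessFm (k : ℕ) (z : EuclideanSpace ℝ (Fin (k + 2))) :
    EuclideanSpace ℝ (Fin (k + 2)) →L[ℝ] EuclideanSpace ℝ (Fin (k + 2)) :=
  ((vv k z / 2) • projX k 2 + (innerSL ℝ (((k : ℝ) - 1) • projY k 2 z)).smulRight (projX k 2 z)) +
    (((k - 1) * (uu k z - 2 * vv k z) / 2) • projY k 2 +
      (innerSL ℝ (((k : ℝ) - 1) • (projX k 2 z - (2 * ((k : ℝ) - 1)) • projY k 2 z))).smulRight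
        (projY k 2 z))

theorem hasFDerivAt_gradFm (z : EuclideanSpace ℝ (Fin (k + 2))) :
    HasFDerivAt (gradFm k) (hessFm k z) z := by
  have ha : HasFDerivAt (fun w => vv k w / 2) (innerSL ℝ (((k : ℝ) - 1) • projY k 2 z)) z := by
    have hfun : (fun w => vv k w / 2) = fun w => 2⁻¹ * vv k w := by funext w; ring
    rw [hfun]
    refine ((hasFDerivAt_vv z).const_mul (2⁻¹ : ℝ)).congr_fderiv ?_
    ext v
    simp only [map_smul, smul_apply, innerSL_apply_apply, smul_eq_mul]
    ring
  have hb : HasFDerivAt (fun w => ((k : ℝ) - 1) * (uu k w - 2 * vv k w) / 2)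
      (innerSL ℝ (((k : ℝ) - 1) • (projX k 2 z - (2 * ((k : ℝ) - 1)) • projY k 2 z))) z := by
    have hfun : (fun w => ((k : ℝ) - 1) * (uu k w - 2 * vv k w) / 2)
        = fun w => ((k : ℝ) - 1) / 2 * (uu k w - 2 * vv k w) := by funext w; ring
    rw [hfun]
    refine (((hasFDerivAt_uu z).fun_sub ((hasFDerivAt_vv z).const_mul 2)).const_mul
      (((k : ℝ) - 1) / 2)).congr_fderiv ?_
    ext v
    simp only [map_smul, map_sub, smul_apply, sub_apply,
      innerSL_apply_apply, smul_eq_mul]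
    ring
  exact (ha.smul (projX k 2).hasFDerivAt).add (hb.smul (projY k 2).hasFDerivAt)

theorem trace_hessFm (z : EuclideanSpace ℝ (Fin (k + 2))) :
    LinearMap.trace ℝ _ (hessFm k z).toLinearMap =
      k * vv k z / 2 + ((k : ℝ) - 1) * (uu k z - 4 * vv k z) := by
  simp only [hessFm, ContinuousLinearMap.toLinearMap_add, ContinuousLinearMap.toLinearMap_smul,
    ContinuousLinearMap.coe_smulRight, map_add, map_smul, LinearMap.trace_smulRight, trace_projX,
    trace_projY, smul_eq_mul, LinearMap.smul_apply, ContinuousLinearMap.coe_coe,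
    innerSL_apply_apply, real_inner_smul_left, inner_sub_left, inner_coordProj_coordProj_not,
    inner_coordProj_not_coordProj, real_inner_self_eq_norm_sq]
  rw [vv_eq_mul_norm_projY_sq]
  ring

theorem hessFm_gradFm (z : EuclideanSpace ℝ (Fin (k + 2))) :
    hessFm k z (gradFm k z) =
      (vv k z ^ 2 / 4 + ((k : ℝ) - 1) * (uu k z - 2 * vv k z) * vv k z / 2) • projX k 2 z +
        (((k : ℝ) - 1) ^ 2 * (uu k z - 2 * vv k z) ^ 2 / 4 +
          ((k : ℝ) - 1) * (uu k z * vv k z / 2 - ((k : ℝ) - 1) * (uu k z - 2 * vv k z) * vv k z)) •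
          projY k 2 z := by
  simp only [hessFm, gradFm, add_apply, smul_apply,
    ContinuousLinearMap.smulRight_apply, innerSL_apply_apply, map_add, map_smul,
    coordProj_coordProj, coordProj_coordProj_not, coordProj_not_coordProj, smul_zero, zero_add,
    real_inner_smul_left, inner_sub_left, inner_coordProj_coordProj_not,
    inner_coordProj_not_coordProj, real_inner_self_eq_norm_sq]
  rw [uu_eq_norm_projX_sq, vv_eq_mul_norm_projY_sq]
  module

theorem inner_gradFm_hessFm_gradFm (z : EuclideanSpace ℝ (Fin (k + 2))) :
    ⟪gradFm k z, hessFm k z (gradFm k z)⟫ =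
      uu k z * vv k z ^ 3 / 8 + ((k : ℝ) - 1) ^ 2 * (uu k z - 2 * vv k z) ^ 3 * vv k z / 8
        + ((k : ℝ) - 1) * (uu k z - 2 * vv k z) * uu k z * vv k z ^ 2 / 2
        - ((k : ℝ) - 1) ^ 2 * (uu k z - 2 * vv k z) ^ 2 * vv k z ^ 2 / 2 := by
  rw [hessFm_gradFm, gradFm]
  simp only [inner_add_left, inner_add_right, real_inner_smul_left, real_inner_smul_right,
    inner_coordProj_coordProj_not, inner_coordProj_not_coordProj, real_inner_self_eq_norm_sq]
  rw [uu_eq_norm_projX_sq, vv_eq_mul_norm_projY_sq]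
  ring

end Hessian

theorem stmt15_general (k : ℕ)
    (z : EuclideanSpace ℝ (Fin (k + 2))) (hz : uu k z < vv k z) :
    divg (fun w => ‖gradient (fm k) w‖⁻¹ • gradient (fm k) w) z =
        (1 / 8 * ((k : ℝ) - 1) * (uu k z - vv k z) * vv k z *
            (((k : ℝ) - 1) * uu k z ^ 2 + (3 - 4 * (k : ℝ)) * uu k z * vv k z
              + 4 * ((k : ℝ) - 2) * vv k z ^ 2))
          / (1 / 4 * vv k z *
              (((k : ℝ) - 1) * (uu k z - 2 * vv k z) ^ 2
                + uu k z * vv k z)) ^ ((3 : ℝ) / 2) ∧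
      ‖gradient (fm k) z‖ ^ 2 =
        1 / 4 * vv k z *
          (((k : ℝ) - 1) * (uu k z - 2 * vv k z) ^ 2 + uu k z * vv k z) := by
  rw [gradient_fm]
  refine ⟨?_, norm_gradFm_sq z⟩
  have h32 : (‖gradFm k z‖ ^ 2) ^ ((3 : ℝ) / 2) = ‖gradFm k z‖ ^ 3 := by
    rw [← Real.rpow_natCast, ← Real.rpow_mul (norm_nonneg _)]
    norm_num
  rw [divg_inv_norm_smul (hasFDerivAt_gradFm z) (gradFm_ne_zero hz), trace_hessFm,
    inner_gradFm_hessFm_gradFm, ← norm_gradFm_sq, h32, norm_gradFm_sq]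
  ring

/-- The explicit formula for `div g` and `|∇f₋|^2` on `{u < v}` for `(h,k) = (2,k)`
with `d = 1` (Section 3.3 of the paper). -/
theorem stmt15 (k : ℕ) (hk7 : 7 ≤ k) (hk11 : k ≤ 11)
    (z : EuclideanSpace ℝ (Fin (k + 2))) (hz : uu k z < vv k z) :
    divg (fun w => ‖gradient (fm k) w‖⁻¹ • gradient (fm k) w) z =
        (1 / 8 * ((k : ℝ) - 1) * (uu k z - vv k z) * vv k z *
            (((k : ℝ) - 1) * uu k z ^ 2 + (3 - 4 * (k : ℝ)) * uu k z * vv k z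
              + 4 * ((k : ℝ) - 2) * vv k z ^ 2))
          / (1 / 4 * vv k z *
              (((k : ℝ) - 1) * (uu k z - 2 * vv k z) ^ 2
                + uu k z * vv k z)) ^ ((3 : ℝ) / 2) ∧
      ‖gradient (fm k) z‖ ^ 2 =
        1 / 4 * vv k z *
          (((k : ℝ) - 1) * (uu k z - 2 * vv k z) ^ 2 + uu k z * vv k z) :=
  stmt15_general k z hz
end
end
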